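/- arXiv:2406.15970 — 2 statements merged into one kernel-verified Lean document; each statement's English description precedes it below -/
import Mathlib

section
/- Let U1(s,t) = s²·(tλ'+1) − 2st + t on [0,1]² with λ' < 1. Then there exists no Nash equilibrium (s*,t*) ∈ [0,1]², i.e., no pair such that U1(s*,t*) ≥ U1(s,t*) for all s ∈ [0,1] and U1(s*,t*) ≤ U1(s*,t) for all t ∈ [0,1]. -/
/-- P1's utility in the transformed absentminded penalty shoot-out. -/
noncomputable def U1 (l s t : ℝ) : ℝ := s^2 * (t * l + 1) - 2 * s * t + t

theorem stmt4 (l : ℝ) (hl : l < 1) :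
    ¬ ∃ s t : ℝ, s ∈ Set.Icc (0:ℝ) 1 ∧ t ∈ Set.Icc (0:ℝ) 1 ∧
      (∀ s' ∈ Set.Icc (0:ℝ) 1, U1 l s' t ≤ U1 l s t) ∧
      (∀ t' ∈ Set.Icc (0:ℝ) 1, U1 l s t ≤ U1 l s t') := by
  rintro ⟨s, t, ⟨hs0, hs1⟩, ⟨ht0, ht1⟩, h1, h2⟩
  have e0 := h2 0 (by norm_num)
  have e1 := h2 1 (by norm_num)
  have f0 := h1 0 (by norm_num)
  have f1 := h1 1 (by norm_num)
  simp only [U1] at e0 e1 f0 f1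
  rcases lt_trichotomy (s^2*l - 2*s + 1) 0 with hc | hc | hc
  · -- c < 0 forces t = 1
    have ht : t = 1 := by nlinarith [e1]
    subst ht
    have hs : s = 0 := by nlinarith [f0]
    subst hs
    norm_num at hc
  · -- c = 0
    have hsne1 : s ≠ 1 := by rintro rfl; nlinarith
    have hsne0 : s ≠ 0 := by rintro rfl; norm_num at hc
    have hsp : 0 < s := lt_of_le_of_ne hs0 (Ne.symm hsne0)
    have hsl : 0 < 1 - s := by
      have := lt_of_le_of_ne hs1 hsne1; linarith
    have key1 : 0 ≤ s * ((t*l+1)*s - 2*t) := by nlinarith [f0]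
    have key2 : 0 ≤ (1-s) * (2*t - (t*l+1)*(1+s)) := by nlinarith [f1]
    have ha : t*l+1 ≤ 0 := by
      nlinarith [mul_nonneg hsl.le key1, mul_nonneg hsp.le key2,
        mul_pos hsp hsl]
    have htne : t ≠ 0 := by rintro rfl; norm_num at ha
    have htp : 0 < t := lt_of_le_of_ne ht0 (Ne.symm htne)
    nlinarith [key1, mul_pos hsp htp, mul_nonneg (neg_nonneg.mpr ha) hs0]
  · -- c > 0 forces t = 0
    have ht : t = 0 := by nlinarith [e0]
    subst ht
    have hs : s = 1 := by nlinarith [f1]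
    subst hs
    nlinarith
end

section
/- Let U1(s,t) = s²·(tλ'+1) − 2st + t on [0,1]². The game (max over s, min over t) has a Nash equilibrium if and only if λ' ≥ 1. -/
theorem stmt5 (l : ℝ) :
    (∃ s t : ℝ, s ∈ Set.Icc (0:ℝ) 1 ∧ t ∈ Set.Icc (0:ℝ) 1 ∧
      (∀ s' ∈ Set.Icc (0:ℝ) 1, U1 l s' t ≤ U1 l s t) ∧
      (∀ t' ∈ Set.Icc (0:ℝ) 1, U1 l s t ≤ U1 l s t')) ↔ 1 ≤ l := by
  constructor
  · rintro ⟨s, t, ⟨hs0, hs1⟩, ⟨ht0, ht1⟩, hmax, hmin⟩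
    by_contra hl
    push_neg at hl
    have h0 := hmax 0 (by norm_num)
    have h1 := hmax 1 (by norm_num)
    have k0 := hmin 0 (by norm_num)
    have k1 := hmin 1 (by norm_num)
    simp only [U1] at h0 h1 k0 k1
    rcases lt_trichotomy (s^2*l - 2*s + 1) 0 with hc | hc | hc
    · -- c < 0 : minimality against t'=1 forces t = 1, then h0 gives 1 ≤ s² + c < 1
      have ht : t = 1 := by nlinarith [mul_nonneg (sub_nonneg.2 ht1) (neg_nonneg.2 hc.le)]
      rw [ht] at h0
      nlinarith
    · -- c = 0 case
      have hsne0 : s ≠ 0 := by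
        intro h; rw [h] at hc; norm_num at hc
      have hsne1 : s ≠ 1 := by
        intro h; rw [h] at hc; nlinarith
      have hs0' : 0 < s := lt_of_le_of_ne hs0 (Ne.symm hsne0)
      have hs1' : s < 1 := lt_of_le_of_ne hs1 hsne1
      -- from h0 : 0 ≤ s * ((t*l+1)*s - 2*t)
      have hP : 0 ≤ (t*l+1)*s - 2*t := by
        by_contra h
        push_neg at h
        nlinarith [mul_pos hs0' (neg_pos.2 h)]
      -- from h1 : (1-s) * ((t*l+1)*(1+s) - 2*t) ≤ 0
      have hQ : (t*l+1)*(1+s) - 2*t ≤ 0 := by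
        by_contra h
        push_neg at h
        nlinarith [mul_pos (sub_pos.2 hs1') h]
      have ha : t*l + 1 ≤ 0 := by nlinarith
      have htle : t ≤ 0 := by nlinarith [mul_nonpos_of_nonpos_of_nonneg ha hs0]
      have ht : t = 0 := le_antisymm htle ht0
      rw [ht] at ha
      linarith
    · -- c > 0 : minimality against t'=0 forces t = 0, then h1 gives 1 ≤ s², s = 1, c = l-1 > 0
      have ht : t = 0 := by
        by_contra h
        have htpos : 0 < t := lt_of_le_of_ne ht0 (Ne.symm h)
        nlinarith [mul_pos htpos hc]
      rw [ht] at h1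
      nlinarith
  · intro hl
    refine ⟨1, 0, by norm_num, by norm_num, ?_, ?_⟩
    · rintro s' ⟨h0, h1⟩
      simp only [U1]
      nlinarith
    · rintro t' ⟨h0, h1⟩
      simp only [U1]
      nlinarith [mul_nonneg h0 (sub_nonneg.2 hl)]
end
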